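/- For every even n = 2m with m ≥ 1, there exists ε > 0 such that for all q ∈ (1−ε, 1) one has t_n · (∑_{i=0}^{n} t_i q^i) > 0. (Consequently, in this range of q the greedy rule forces the player to switch after an even-indexed round when the sequence so far is Thue-Morse.) -/

import Mathlib

/-!
The pairs `t (2j), t (2j+1)` cancel, so at `q = 1` the sum is `t (2m)` and the expression equals
`t (2m) ^ 2 = 1`; by continuity in `q` it stays positive just to the left of `1`.
-/

/-- The Thue-Morse sequence on the alphabet `{-1, 1}`:
`t 0 = -1`, `t (2i) = t i`, `t (2i+1) = -t (2i)`. -/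
def thueMorse : ℕ → ℤ
  | 0 => -1
  | n + 1 =>
    have : (n + 1) / 2 < n + 1 := Nat.div_lt_self (Nat.succ_pos n) one_lt_two
    if (n + 1) % 2 = 0 then thueMorse ((n + 1) / 2) else -thueMorse ((n + 1) / 2)

theorem thueMorse_two_mul (j : ℕ) : thueMorse (2 * j) = thueMorse j := by
  cases j with
  | zero => rfl
  | succ k =>
    rw [show 2 * (k + 1) = (2 * k + 1) + 1 by ring, thueMorse]
    simp only [show (2 * k + 1 + 1) % 2 = 0 by omega, show (2 * k + 1 + 1) / 2 = k + 1 by omega,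
      if_true]

theorem thueMorse_two_mul_add_one (j : ℕ) : thueMorse (2 * j + 1) = -thueMorse j := by
  rw [thueMorse]
  simp only [show (2 * j + 1) % 2 = 1 by omega, show (2 * j + 1) / 2 = j by omega,
    one_ne_zero, if_false]

theorem thueMorse_mul_self (n : ℕ) : thueMorse n * thueMorse n = 1 := by
  induction n using Nat.strong_induction_on with
  | _ n ih =>
    obtain ⟨j, rfl | rfl⟩ := Nat.even_or_odd' n
    · rcases j.eq_zero_or_pos with rfl | hj
      · simp [thueMorse]
      · rw [thueMorse_two_mul]; exact ih j (by omega)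
    · rw [thueMorse_two_mul_add_one, neg_mul_neg]; exact ih j (by omega)

theorem sum_range_two_mul_thueMorse (m : ℕ) : ∑ i ∈ Finset.range (2 * m), thueMorse i = 0 := by
  induction m with
  | zero => rfl
  | succ k ih =>
    rw [show 2 * (k + 1) = (2 * k + 1) + 1 by ring, Finset.sum_range_succ, Finset.sum_range_succ,
      ih, thueMorse_two_mul_add_one, thueMorse_two_mul]
    ring

theorem sum_range_two_mul_succ_thueMorse (m : ℕ) :
    ∑ i ∈ Finset.range (2 * m + 1), thueMorse i = thueMorse (2 * m) := by
  rw [Finset.sum_range_succ, sum_range_two_mul_thueMorse, zero_add]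

theorem ContinuousAt.exists_pos_forall_Ioo_sub_pos {f : ℝ → ℝ} {a : ℝ} (hf : ContinuousAt f a)
    (ha : 0 < f a) : ∃ ε > 0, ∀ x ∈ Set.Ioo (a - ε) a, 0 < f x := by
  have hev : ∀ᶠ x in nhdsWithin a (Set.Iio a), 0 < f x :=
    (hf.eventually (lt_mem_nhds ha)).filter_mono nhdsWithin_le_nhds
  obtain ⟨l, hl, hsub⟩ := mem_nhdsLT_iff_exists_Ioo_subset.1 hev
  exact ⟨a - l, sub_pos.2 hl, fun x hx ↦ hsub (by rwa [sub_sub_cancel] at hx)⟩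

theorem thueMorse_even_partial_sum_pos_general (m : ℕ) :
    ∃ ε > (0 : ℝ), ∀ q ∈ Set.Ioo (1 - ε) (1 : ℝ),
      0 < (thueMorse (2 * m) : ℝ)
        * ∑ i ∈ Finset.range (2 * m + 1), (thueMorse i : ℝ) * q ^ i := by
  set p : ℝ → ℝ := fun q =>
    (thueMorse (2 * m) : ℝ) * ∑ i ∈ Finset.range (2 * m + 1), (thueMorse i : ℝ) * q ^ i
  have hp_one : p 1 = 1 := by
    have h := thueMorse_mul_self (2 * m)
    nth_rewrite 2 [← sum_range_two_mul_succ_thueMorse m] at h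
    simp only [p, one_pow, mul_one]
    exact_mod_cast h
  have hp_cont : Continuous p := by fun_prop
  exact hp_cont.continuousAt.exists_pos_forall_Ioo_sub_pos (by rw [hp_one]; exact one_pos)

/-- For every even `n = 2m` with `m ≥ 1`, there exists `ε > 0` such that
for all `q ∈ (1-ε, 1)` one has `t_n · (∑_{i=0}^n t_i q^i) > 0`. -/
theorem thueMorse_even_partial_sum_pos (m : ℕ) (hm : 1 ≤ m) :
    ∃ ε > (0 : ℝ), ∀ q ∈ Set.Ioo (1 - ε) (1 : ℝ),
      0 < (thueMorse (2 * m) : ℝ)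
        * ∑ i ∈ Finset.range (2 * m + 1), (thueMorse i : ℝ) * q ^ i :=
  thueMorse_even_partial_sum_pos_general m
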